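/- The pullback metric of the embedding n(x,y) is a scalar multiple ρ² of the Euclidean metric on ℝ² (i.e., the embedding is a conformal isometry with scale ρ) if and only if R²k₁² + r²k₃² = R²k₂² + r²k₄² = ρ² and R²k₁k₂ + r²k₃k₄ = 0. -/

import Mathlib

/-- The toroidal embedding `n : ℝ² → ℝ⁴`, with Euclidean metric on both source and
target. -/
noncomputable def torusEmbE (R r k₁ k₂ k₃ k₄ : ℝ) (p : EuclideanSpace ℝ (Fin 2)) :
    EuclideanSpace ℝ (Fin 4) :=
  (WithLp.equiv 2 (Fin 4 → ℝ)).symm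
    ![R * Real.cos (k₁ * p 0 + k₂ * p 1), R * Real.sin (k₁ * p 0 + k₂ * p 1),
      r * Real.cos (k₃ * p 0 + k₄ * p 1), r * Real.sin (k₃ * p 0 + k₄ * p 1)]

noncomputable def ell (a b : ℝ) : EuclideanSpace ℝ (Fin 2) →L[ℝ] ℝ :=
  a • EuclideanSpace.proj 0 + b • EuclideanSpace.proj 1

lemma ell_apply (a b : ℝ) (p : EuclideanSpace ℝ (Fin 2)) : ell a b p = a * p 0 + b * p 1 := by
  simp [ell]

noncomputable def torusD (R r k₁ k₂ k₃ k₄ : ℝ) (p : EuclideanSpace ℝ (Fin 2)) :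
    EuclideanSpace ℝ (Fin 2) →L[ℝ] EuclideanSpace ℝ (Fin 4) :=
  (PiLp.continuousLinearEquiv 2 ℝ (fun _ : Fin 4 => ℝ)).symm.toContinuousLinearMap.comp
    (ContinuousLinearMap.pi
      ![(-(R * Real.sin (k₁ * p 0 + k₂ * p 1))) • ell k₁ k₂,
        (R * Real.cos (k₁ * p 0 + k₂ * p 1)) • ell k₁ k₂,
        (-(r * Real.sin (k₃ * p 0 + k₄ * p 1))) • ell k₃ k₄,
        (r * Real.cos (k₃ * p 0 + k₄ * p 1)) • ell k₃ k₄])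

lemma torus_hasFDerivAt (R r k₁ k₂ k₃ k₄ : ℝ) (p : EuclideanSpace ℝ (Fin 2)) :
    HasFDerivAt (torusEmbE R r k₁ k₂ k₃ k₄) (torusD R r k₁ k₂ k₃ k₄ p) p := by
  have h1 : HasFDerivAt (fun q : EuclideanSpace ℝ (Fin 2) => k₁ * q 0 + k₂ * q 1)
      (ell k₁ k₂) p := by
    exact (ell k₁ k₂).hasFDerivAt (x := p)
  have h2 : HasFDerivAt (fun q : EuclideanSpace ℝ (Fin 2) => k₃ * q 0 + k₄ * q 1)
      (ell k₃ k₄) p := by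
    exact (ell k₃ k₄).hasFDerivAt (x := p)
  have hc1 : HasFDerivAt (fun q : EuclideanSpace ℝ (Fin 2) => R * Real.cos (k₁ * q 0 + k₂ * q 1))
      ((-(R * Real.sin (k₁ * p 0 + k₂ * p 1))) • ell k₁ k₂) p := by
    have := (h1.cos).const_mul R
    refine this.congr_fderiv ?_
    ext q; simp; ring
  have hs1 : HasFDerivAt (fun q : EuclideanSpace ℝ (Fin 2) => R * Real.sin (k₁ * q 0 + k₂ * q 1))
      ((R * Real.cos (k₁ * p 0 + k₂ * p 1)) • ell k₁ k₂) p := by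
    have := (h1.sin).const_mul R
    refine this.congr_fderiv ?_
    ext q; simp; ring
  have hc2 : HasFDerivAt (fun q : EuclideanSpace ℝ (Fin 2) => r * Real.cos (k₃ * q 0 + k₄ * q 1))
      ((-(r * Real.sin (k₃ * p 0 + k₄ * p 1))) • ell k₃ k₄) p := by
    have := (h2.cos).const_mul r
    refine this.congr_fderiv ?_
    ext q; simp; ring
  have hs2 : HasFDerivAt (fun q : EuclideanSpace ℝ (Fin 2) => r * Real.sin (k₃ * q 0 + k₄ * q 1))
      ((r * Real.cos (k₃ * p 0 + k₄ * p 1)) • ell k₃ k₄) p := by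
    have := (h2.sin).const_mul r
    refine this.congr_fderiv ?_
    ext q; simp; ring
  have hpi : HasFDerivAt (fun q : EuclideanSpace ℝ (Fin 2) =>
      (![R * Real.cos (k₁ * q 0 + k₂ * q 1), R * Real.sin (k₁ * q 0 + k₂ * q 1),
        r * Real.cos (k₃ * q 0 + k₄ * q 1), r * Real.sin (k₃ * q 0 + k₄ * q 1)] : Fin 4 → ℝ))
      (ContinuousLinearMap.pi
        ![(-(R * Real.sin (k₁ * p 0 + k₂ * p 1))) • ell k₁ k₂,
          (R * Real.cos (k₁ * p 0 + k₂ * p 1)) • ell k₁ k₂,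
          (-(r * Real.sin (k₃ * p 0 + k₄ * p 1))) • ell k₃ k₄,
          (r * Real.cos (k₃ * p 0 + k₄ * p 1)) • ell k₃ k₄]) p := by
    rw [hasFDerivAt_pi']
    intro i
    fin_cases i
    · exact hc1
    · exact hs1
    · exact hc2
    · exact hs2
  have := ((PiLp.continuousLinearEquiv 2 ℝ (fun _ : Fin 4 => ℝ)).symm.toContinuousLinearMap.hasFDerivAt).comp p hpi
  exact this

lemma torusD_norm_sq (R r k₁ k₂ k₃ k₄ : ℝ) (p v : EuclideanSpace ℝ (Fin 2)) :
    ‖torusD R r k₁ k₂ k₃ k₄ p v‖ ^ 2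
      = R ^ 2 * (k₁ * v 0 + k₂ * v 1) ^ 2 + r ^ 2 * (k₃ * v 0 + k₄ * v 1) ^ 2 := by
  rw [EuclideanSpace.norm_eq]
  rw [Real.sq_sqrt (by positivity)]
  have : ∀ i : Fin 4, torusD R r k₁ k₂ k₃ k₄ p v i =
      (![(-(R * Real.sin (k₁ * p 0 + k₂ * p 1))) • ell k₁ k₂,
        (R * Real.cos (k₁ * p 0 + k₂ * p 1)) • ell k₁ k₂,
        (-(r * Real.sin (k₃ * p 0 + k₄ * p 1))) • ell k₃ k₄,
        (r * Real.cos (k₃ * p 0 + k₄ * p 1)) • ell k₃ k₄] i) v := by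
    intro i; rfl
  simp only [Fin.sum_univ_four, this]
  simp only [Matrix.cons_val_zero, Matrix.cons_val_one, Matrix.head_cons,
    Matrix.cons_val_two, Matrix.tail_cons, Matrix.cons_val_three,
    ContinuousLinearMap.smul_apply, ell_apply, smul_eq_mul, Real.norm_eq_abs, sq_abs]
  have s1 := Real.sin_sq_add_cos_sq (k₁ * p 0 + k₂ * p 1)
  have s2 := Real.sin_sq_add_cos_sq (k₃ * p 0 + k₄ * p 1)
  linear_combination (R^2*(k₁*v 0+k₂*v 1)^2) * s1 + (r^2*(k₃*v 0+k₄*v 1)^2) * s2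

/-- The pullback metric of the embedding `n(x,y)` is a scalar
multiple `ρ²` of the Euclidean metric on `ℝ²` (i.e. the embedding is a conformal
isometry with scale `ρ`, `‖dn_p(v)‖ = ρ‖v‖` for all tangent vectors `v`) if and only
if `R²k₁² + r²k₃² = R²k₂² + r²k₄² = ρ²` and `R²k₁k₂ + r²k₃k₄ = 0`. -/
theorem torusEmb_conformal_iff
    (R r k₁ k₂ k₃ k₄ ρ : ℝ) (hR : 0 < R) (hr : 0 < r) (hρ : 0 ≤ ρ) :
    (∀ (p v : EuclideanSpace ℝ (Fin 2)),
        ‖fderiv ℝ (torusEmbE R r k₁ k₂ k₃ k₄) p v‖ = ρ * ‖v‖) ↔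
      (R ^ 2 * k₁ ^ 2 + r ^ 2 * k₃ ^ 2 = ρ ^ 2 ∧
       R ^ 2 * k₂ ^ 2 + r ^ 2 * k₄ ^ 2 = ρ ^ 2 ∧
       R ^ 2 * k₁ * k₂ + r ^ 2 * k₃ * k₄ = 0) := by
  have hfd : ∀ p : EuclideanSpace ℝ (Fin 2),
      fderiv ℝ (torusEmbE R r k₁ k₂ k₃ k₄) p = torusD R r k₁ k₂ k₃ k₄ p :=
    fun p => (torus_hasFDerivAt R r k₁ k₂ k₃ k₄ p).fderiv
  have key : ∀ p v : EuclideanSpace ℝ (Fin 2),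
      ‖fderiv ℝ (torusEmbE R r k₁ k₂ k₃ k₄) p v‖ ^ 2
        = R ^ 2 * (k₁ * v 0 + k₂ * v 1) ^ 2 + r ^ 2 * (k₃ * v 0 + k₄ * v 1) ^ 2 := by
    intro p v; rw [hfd]; exact torusD_norm_sq R r k₁ k₂ k₃ k₄ p v
  constructor
  · intro h
    have hq : ∀ v : EuclideanSpace ℝ (Fin 2),
        R ^ 2 * (k₁ * v 0 + k₂ * v 1) ^ 2 + r ^ 2 * (k₃ * v 0 + k₄ * v 1) ^ 2
          = ρ ^ 2 * (v 0 ^ 2 + v 1 ^ 2) := by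
      intro v
      have h1 := h 0 v
      have h2 := congrArg (· ^ 2) h1
      simp only [mul_pow] at h2
      rw [key] at h2
      have hv : ‖v‖ ^ 2 = v 0 ^ 2 + v 1 ^ 2 := by
        rw [EuclideanSpace.norm_eq, Real.sq_sqrt (by positivity)]
        simp [Fin.sum_univ_two, sq_abs]
      rw [hv] at h2
      exact h2
    have e0 := hq (EuclideanSpace.single 0 1)
    have e1 := hq (EuclideanSpace.single 1 1)
    have e2 := hq (EuclideanSpace.single 0 1 + EuclideanSpace.single 1 1)
    simp only [EuclideanSpace.single_apply, PiLp.add_apply] at e0 e1 e2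
    norm_num at e0 e1 e2
    refine ⟨by linarith, by linarith, by linarith⟩
  · rintro ⟨h1, h2, h3⟩ p v
    have hv : ‖v‖ ^ 2 = v 0 ^ 2 + v 1 ^ 2 := by
      rw [EuclideanSpace.norm_eq, Real.sq_sqrt (by positivity)]
      simp [Fin.sum_univ_two, sq_abs]
    have hsq : ‖fderiv ℝ (torusEmbE R r k₁ k₂ k₃ k₄) p v‖ ^ 2 = (ρ * ‖v‖) ^ 2 := by
      rw [key, mul_pow, hv]
      linear_combination (v 0 ^ 2) * h1 + (v 1 ^ 2) * h2 + (2 * v 0 * v 1) * h3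
    have := congrArg Real.sqrt hsq
    rwa [Real.sqrt_sq (norm_nonneg _), Real.sqrt_sq (mul_nonneg hρ (norm_nonneg _))] at this
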